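/- For every reduced word i ∈ Σ_n, every • ∈ {A, D}, and every s with 0 ≤ s ≤ n(n−1)/2, there is an injection Ψ_•(i, s) : GP(i) ↪ GP(E_•(s)(i)), and its image is exactly the set of rigorous paths P of G(E_•(s)(i)) such that no switching node of P lies on the wire ℓ_•, where ℓ_D := ℓ_{n+1} and ℓ_A := ℓ_1 in the wiring diagram of E_•(s)(i). -/

import Mathlib

open scoped Classical

noncomputable section

namespace StringPolytope

/-! ### Words, reduced words, two-moves -/

/-- the simple transposition `s_a = (a, a+1)` acting on `ℕ` (wires are `1, …, n+1`). -/
def sTrans (a : ℕ) : Equiv.Perm ℕ := Equiv.swap a (a + 1)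

/-- product `s_{i₁} ⋯ s_{i_N}` of the simple transpositions of a word. -/
def wordProd (w : List ℕ) : Equiv.Perm ℕ := (w.map sTrans).prod

/-- the longest element `w₀` of the symmetric group on `{1, …, n+1}`,
sending `k ↦ n + 2 - k` there and fixing everything else. -/
def longestPerm (n : ℕ) : Equiv.Perm ℕ :=
  Function.Involutive.toPerm
    (fun k => if 1 ≤ k ∧ k ≤ n + 1 then n + 2 - k else k)
    (by intro k; dsimp only; split_ifs <;> omega)

/-- `w ∈ Σ_{n+1}`: a reduced word of the longest element of `S_{n+1}`,
i.e. a word over `[n] = {1,…,n}` of length `N = n(n+1)/2` whose product is `w₀`. -/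
def IsReduced (n : ℕ) (w : List ℕ) : Prop :=
  w.length = n * (n + 1) / 2 ∧ (∀ a ∈ w, 1 ≤ a ∧ a ≤ n) ∧ wordProd w = longestPerm n

/-- a single 2-move: exchange two adjacent letters `(a, b)` with `|a - b| > 1`. -/
def TwoMoveStep (w w' : List ℕ) : Prop :=
  ∃ u v a b, (a + 1 < b ∨ b + 1 < a) ∧ w = u ++ a :: b :: v ∧ w' = u ++ b :: a :: v

/-- 2-move equivalence of words. -/
def TwoMoveEquiv : List ℕ → List ℕ → Prop := Relation.ReflTransGen TwoMoveStep

/-- `A_n = (1, 2, …, n)`. -/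
def ascWord (n : ℕ) : List ℕ := (List.range n).map (· + 1)

/-- `D_n = (n, n-1, …, 1)`. -/
def descWord (n : ℕ) : List ℕ := (ascWord n).reverse

/-! ### The wiring diagram -/

/-- the letter `i_j` of `w` (1-based index `j`); the node `t_j` lies in column `i_j`. -/
def letterAt (w : List ℕ) (j : ℕ) : ℕ := w.getD (j - 1) 0

/-- `1 ≤ j ≤ N`: `t_j` is an actual node of the diagram. -/
def ValidNode (w : List ℕ) (j : ℕ) : Prop := 1 ≤ j ∧ j ≤ w.length

/-- the column-to-wire assignment just above node `t_j`
(at the top of the diagram, wire `k` is in column `k`). -/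
def stateAbove (w : List ℕ) (j : ℕ) : Equiv.Perm ℕ := wordProd (w.take (j - 1))

/-- the column-to-wire assignment just below node `t_j`. -/
def stateBelow (w : List ℕ) (j : ℕ) : Equiv.Perm ℕ := wordProd (w.take j)

/-- one of the two wires crossing at node `t_j` (the one leaving upward-left). -/
def wireX (w : List ℕ) (j : ℕ) : ℕ := stateAbove w j (letterAt w j)

/-- the other wire crossing at node `t_j` (the one leaving upward-right). -/
def wireY (w : List ℕ) (j : ℕ) : ℕ := stateAbove w j (letterAt w j + 1)

/-- the node `t_j` lies on the wire `ℓ_r`. -/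
def NodeOnWire (w : List ℕ) (j r : ℕ) : Prop := wireX w j = r ∨ wireY w j = r

/-- given one wire `r` at node `t_j`, the other wire crossing there. -/
def otherWire (w : List ℕ) (j r : ℕ) : ℕ := if wireX w j = r then wireY w j else wireX w j

/-- the column of wire `ℓ_r` at the height of node `t_j`. -/
def wireCol (w : List ℕ) (j r : ℕ) : ℕ := (stateBelow w j).symm r

/-- node `t_j` lies strictly below the wire `ℓ_{n+1}`
(which runs from the bottom-left corner to the top-right corner). -/
def BelowWireLast (n : ℕ) (w : List ℕ) (j : ℕ) : Prop :=
  wireCol w j (n + 1) < letterAt w j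

/-- node `t_j` lies strictly above the wire `ℓ_{n+1}`. -/
def AboveWireLast (n : ℕ) (w : List ℕ) (j : ℕ) : Prop :=
  letterAt w j + 1 < wireCol w j (n + 1)

/-- node `t_j` lies strictly below the wire `ℓ_1`
(which runs from the bottom-right corner to the top-left corner). -/
def BelowWireOne (w : List ℕ) (j : ℕ) : Prop :=
  letterAt w j + 1 < wireCol w j 1

/-- node `t_j` lies strictly above the wire `ℓ_1`. -/
def AboveWireOne (w : List ℕ) (j : ℕ) : Prop :=
  wireCol w j 1 < letterAt w j

/-! ### Rigorous (Gleizer–Postnikov) paths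

A path in `G(i, k)` is encoded by `k` together with the list of its switching
nodes, in order of travel.  Wires `ℓ_1, …, ℓ_k` are oriented upward
(decreasing node index) and the remaining wires downward. -/

/-- the (1-based indices of the) nodes lying on wire `ℓ_r`, in order of increasing index. -/
def nodesOn (w : List ℕ) (r : ℕ) : List ℕ :=
  ((List.range w.length).map (· + 1)).filter (fun j => decide (NodeOnWire w j r))

/-- nodes on wire `ℓ_r` strictly between the nodes `t_a` and `t_b`. -/
def segList (w : List ℕ) (r a b : ℕ) : List ℕ :=
  (nodesOn w r).filter (fun j => decide (min a b < j ∧ j < max a b))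

/-- nodes on wire `ℓ_r` strictly below the node `t_a`. -/
def tailList (w : List ℕ) (r a : ℕ) : List ℕ :=
  (nodesOn w r).filter (fun j => decide (a < j))

/-- a forbidden fragment of `G(i, k)`: the path passes straight through node `t_j`
travelling along the wire `ℓ_r`, where the other wire `ℓ_b` crossing there has the same
orientation as `ℓ_r` and (`r < b` if both upward, `r > b` if both downward). -/
def Forbidden (w : List ℕ) (k j r : ℕ) : Prop :=
  (r ≤ k ∧ otherWire w j r ≤ k ∧ r < otherWire w j r) ∨
  (k < r ∧ k < otherWire w j r ∧ otherWire w j r < r)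

/-- travelling in `G(i,k)`: currently on wire `ℓ_r` at node `t_a` (just switched there),
with future switching nodes `ms`; the travel is legal and ends at `L_{k+1}`. -/
def TravelOK (w : List ℕ) (k : ℕ) : ℕ → ℕ → List ℕ → Prop
  | r, a, [] => r = k + 1 ∧ ∀ j ∈ tailList w r a, ¬ Forbidden w k j r
  | r, a, m :: ms =>
      ValidNode w m ∧ NodeOnWire w m r ∧
      (if r ≤ k then m < a else a < m) ∧
      (∀ j ∈ segList w r a m, ¬ Forbidden w k j r) ∧
      TravelOK w k (otherWire w m r) m ms

/-- all nodes visited after the switch at node `t_a` onto wire `ℓ_r`. -/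
def visitTail (w : List ℕ) : ℕ → ℕ → List ℕ → List ℕ
  | r, a, [] => tailList w r a
  | r, a, m :: ms => segList w r a m ++ m :: visitTail w (otherWire w m r) m ms

/-- the list of all nodes visited by the path (switching nodes and straight passes). -/
def visitList (w : List ℕ) (k : ℕ) : List ℕ → List ℕ
  | [] => []
  | m :: ms => tailList w k m ++ m :: visitTail w (otherWire w m k) m ms

/-- `(k, ms)` encodes a rigorous (Gleizer–Postnikov) path in `G(i, k)`:
it starts at `L_k` going up the wire `ℓ_k`, switches wires exactly at the nodes
listed in `ms`, respects the orientation, ends at `L_{k+1}`, contains no forbidden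
fragment and passes through each node at most once. -/
def IsGPPath (n : ℕ) (w : List ℕ) (k : ℕ) (ms : List ℕ) : Prop :=
  1 ≤ k ∧ k ≤ n ∧
  (match ms with
   | [] => False
   | m :: rest =>
       ValidNode w m ∧ NodeOnWire w m k ∧
       (∀ j ∈ tailList w k m, ¬ Forbidden w k j k) ∧
       TravelOK w k (otherWire w m k) m rest) ∧
  (visitList w k ms).Nodup

/-- the set `GP(i)` of all rigorous paths of `G(i)`. -/
def GP (n : ℕ) (w : List ℕ) : Set (ℕ × List ℕ) := {p | IsGPPath n w p.1 p.2}

/-- `|GP(i)|`, the number of rigorous paths. -/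
def numGP (n : ℕ) (w : List ℕ) : ℕ := (GP n w).ncard

/-- the successive switches of a path: `(node, from-wire, to-wire)`. -/
def pathSwitches (w : List ℕ) : ℕ → List ℕ → List (ℕ × ℕ × ℕ)
  | _, [] => []
  | r, m :: ms => (m, r, otherWire w m r) :: pathSwitches w (otherWire w m r) ms

/-- the wire-expression of a path: the successive wires travelled. -/
def wireSeq (w : List ℕ) : ℕ → List ℕ → List ℕ
  | r, [] => [r]
  | r, m :: ms => r :: wireSeq w (otherWire w m r) ms

/-- the peaks of a path: switching nodes where the path switches from an
upward wire to a downward wire. -/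
def peaks (w : List ℕ) (k : ℕ) (ms : List ℕ) : List ℕ :=
  ((pathSwitches w k ms).filter (fun e => decide (e.2.1 ≤ k ∧ k < e.2.2))).map (·.1)

/-! ### String cone, `λ`-cone, string polytope -/

/-- `N = n(n+1)/2`, the number of nodes. -/
abbrev Dim (n : ℕ) : ℕ := n * (n + 1) / 2

/-- the coefficient `a_j` of `t_j` in the string inequality of the path `(k, ms)`:
`+1` if the path switches at `t_j` from `ℓ_r` to `ℓ_s` with `r < s`,
`-1` if it switches with `r > s`, and `0` otherwise. -/
def coeff (w : List ℕ) (k : ℕ) (ms : List ℕ) (j : ℕ) : ℝ :=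
  ((pathSwitches w k ms).map (fun e =>
    if e.1 = j then (if e.2.1 < e.2.2 then (1 : ℝ) else -1) else 0)).sum

/-- the (primitive inward normal) coefficient vector of the string inequality of a path. -/
def normalVec (n : ℕ) (w : List ℕ) (p : ℕ × List ℕ) : Fin (Dim n) → ℝ :=
  fun j => coeff w p.1 p.2 ((j : ℕ) + 1)

/-- the left-hand side `∑ a_j t_j` of the string inequality of the path `p`. -/
def stringIneq (n : ℕ) (w : List ℕ) (p : ℕ × List ℕ) (t : Fin (Dim n) → ℝ) : ℝ :=
  ∑ j : Fin (Dim n), normalVec n w p j * t j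

/-- the string cone `C_i ⊆ ℝ^N`. -/
def stringCone (n : ℕ) (w : List ℕ) : Set (Fin (Dim n) → ℝ) :=
  {t | ∀ p ∈ GP n w, 0 ≤ stringIneq n w p t}

/-- the polyhedron cut out by all string inequalities except the one of `p₀`. -/
def stringConeExcept (n : ℕ) (w : List ℕ) (p₀ : ℕ × List ℕ) : Set (Fin (Dim n) → ℝ) :=
  {t | ∀ p ∈ GP n w, p ≠ p₀ → 0 ≤ stringIneq n w p t}

/-- the coefficient `a_k` in the `λ`-inequality of node `t_j`:
`1` if `t_k` is one column left or right of `t_j`, `-2` if in the same column. -/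
def lamCoeff (w : List ℕ) (j k : ℕ) : ℝ :=
  if letterAt w k = letterAt w j then -2
  else if letterAt w k = letterAt w j + 1 ∨ letterAt w k + 1 = letterAt w j then 1
  else 0

/-- the `λ`-inequality of node `t_{j+1}`:
`t_j ≤ λ_{i_j} + ∑_{k > j} a_k t_k`. -/
def LamIneq (n : ℕ) (w : List ℕ) (lam : ℕ → ℤ) (j : Fin (Dim n)) (t : Fin (Dim n) → ℝ) : Prop :=
  t j ≤ (lam (letterAt w ((j : ℕ) + 1)) : ℝ) +
    ∑ k : Fin (Dim n),
      (if (j : ℕ) < (k : ℕ) then lamCoeff w ((j : ℕ) + 1) ((k : ℕ) + 1) else 0) * t k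

/-- the `λ`-cone `C_i^λ ⊆ ℝ^N`. -/
def lamCone (n : ℕ) (w : List ℕ) (lam : ℕ → ℤ) : Set (Fin (Dim n) → ℝ) :=
  {t | ∀ j, LamIneq n w lam j t}

/-- the polyhedron cut out by all `λ`-inequalities except the one of `j₀`. -/
def lamConeExcept (n : ℕ) (w : List ℕ) (lam : ℕ → ℤ) (j₀ : Fin (Dim n)) :
    Set (Fin (Dim n) → ℝ) :=
  {t | ∀ j, j ≠ j₀ → LamIneq n w lam j t}

/-- the string polytope `Δ_i(λ) = C_i ∩ C_i^λ`. -/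
def stringPolytope (n : ℕ) (w : List ℕ) (lam : ℕ → ℤ) : Set (Fin (Dim n) → ℝ) :=
  stringCone n w ∩ lamCone n w lam

/-- `λ = λ_1 ϖ_1 + ⋯ + λ_n ϖ_n` is a dominant integral weight: all `λ_j ≥ 0`. -/
def Dominant (n : ℕ) (lam : ℕ → ℤ) : Prop := ∀ j, 1 ≤ j → j ≤ n → 0 ≤ lam j

/-- `λ` is a regular dominant integral weight: all `λ_j > 0`. -/
def RegularDominant (n : ℕ) (lam : ℕ → ℤ) : Prop := ∀ j, 1 ≤ j → j ≤ n → 0 < lam j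

/-! ### Unimodular equivalence, Gelfand–Cetlin polytope, facets -/

/-- `P` and `Q` are unimodularly equivalent: `Q = M(P) + v` with `M ∈ GL(m, ℤ)`, `v ∈ ℤ^m`. -/
def UnimodEquiv {m : ℕ} (P Q : Set (Fin m → ℝ)) : Prop :=
  ∃ (M : Matrix (Fin m) (Fin m) ℤ) (v : Fin m → ℤ), IsUnit M.det ∧
    Q = (fun x i => (∑ j, (M i j : ℝ) * x j) + (v i : ℝ)) '' P

/-- the entry `x_{k,j}` (`1 ≤ j ≤ k ≤ n+1`) of a Gelfand–Cetlin pattern, where the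
top row is `x_{n+1,j} = λ_j + ⋯ + λ_n` and `x_{n+1,n+1} = 0`; the pair `(k, j)` is
encoded as the coordinate `k(k-1)/2 + (j-1)` of `ℝ^N`. -/
def gcX (n : ℕ) (lam : ℕ → ℤ) (x : Fin (Dim n) → ℝ) (k j : ℕ) : ℝ :=
  if k = n + 1 then (if j ≤ n then ∑ t ∈ Finset.Icc j n, (lam t : ℝ) else 0)
  else if h : k * (k - 1) / 2 + (j - 1) < Dim n then x ⟨k * (k - 1) / 2 + (j - 1), h⟩ else 0

/-- the Gelfand–Cetlin polytope `GC(λ) ⊆ ℝ^N`. -/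
def GCPolytope (n : ℕ) (lam : ℕ → ℤ) : Set (Fin (Dim n) → ℝ) :=
  {x | ∀ k j, 1 ≤ k → k ≤ n → 1 ≤ j → j ≤ k →
      gcX n lam x k j ≤ gcX n lam x (k + 1) j ∧
      gcX n lam x (k + 1) (j + 1) ≤ gcX n lam x k j}

/-- a face of a convex set: a convex extreme subset. -/
def IsFaceSet {m : ℕ} (S F : Set (Fin m → ℝ)) : Prop := IsExtreme ℝ S F ∧ Convex ℝ F

/-- a facet: a maximal proper face. -/
def IsFacet {m : ℕ} (S F : Set (Fin m → ℝ)) : Prop :=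
  IsFaceSet S F ∧ F ≠ S ∧ ∀ G, IsFaceSet S G → G ≠ S → F ⊆ G → F = G

/-- the number of facets. -/
def numFacets {m : ℕ} (S : Set (Fin m → ℝ)) : ℕ := {F | IsFacet S F}.ncard

/-- combinatorial equivalence: an inclusion-preserving bijection between face lattices. -/
def CombEquiv {m : ℕ} (S T : Set (Fin m → ℝ)) : Prop :=
  ∃ e : {F // IsFaceSet S F} ≃ {F // IsFaceSet T F},
    ∀ F G : {F // IsFaceSet S F}, F.1 ⊆ G.1 ↔ (e F).1 ⊆ (e G).1

/-! ### Indices, contractions and extensions -/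

/-- the `D`-index `ind_D(i) = |i_D^+|` for a decomposition `i ∼ i_D^- D_n i_D^+`
(independent of the decomposition). -/
def indD (n : ℕ) (w : List ℕ) : ℕ :=
  sInf {s | ∃ u v : List ℕ, v.length = s ∧ TwoMoveEquiv w (u ++ descWord n ++ v)}

/-- the `A`-index `ind_A(i) = |i_A^+|` for a decomposition `i ∼ i_A^- A_n i_A^+`. -/
def indA (n : ℕ) (w : List ℕ) : ℕ :=
  sInf {s | ∃ u v : List ℕ, v.length = s ∧ TwoMoveEquiv w (u ++ ascWord n ++ v)}

/-- `w'` is a `D`-contraction `C_D(w) = i_D^- (i_D^+ - 1)` of `w ∈ Σ_{n+1}`. -/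
def IsContractionD (n : ℕ) (w w' : List ℕ) : Prop :=
  ∃ u v : List ℕ, TwoMoveEquiv w (u ++ descWord n ++ v) ∧ w' = u ++ v.map (· - 1)

/-- `w'` is an `A`-contraction `C_A(w) = (i_A^- - 1) i_A^+` of `w ∈ Σ_{n+1}`. -/
def IsContractionA (n : ℕ) (w w' : List ℕ) : Prop :=
  ∃ u v : List ℕ, TwoMoveEquiv w (u ++ ascWord n ++ v) ∧ w' = u.map (· - 1) ++ v

/-- the `D`-extension `E_D(s) : Σ_{n+1} → Σ_{n+2}`,
`i = i^-(s) i^+(s) ↦ i^-(s) D_{n+1} (i^+(s) + 1)` where `|i^+(s)| = s`. -/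
def extD (n : ℕ) (s : ℕ) (w : List ℕ) : List ℕ :=
  w.take (w.length - s) ++ descWord (n + 1) ++ (w.drop (w.length - s)).map (· + 1)

/-- the `A`-extension `E_A(s) : Σ_{n+1} → Σ_{n+2}`,
`i = i^-(s) i^+(s) ↦ (i^-(s) + 1) A_{n+1} i^+(s)`. -/
def extA (n : ℕ) (s : ℕ) (w : List ℕ) : List ℕ :=
  (w.take (w.length - s)).map (· + 1) ++ ascWord (n + 1) ++ w.drop (w.length - s)

/-- there exists `(σ_1, …, σ_n) ∈ {A, D}^n` (here `true = D`, `false = A`) such that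
`ind_{σ_k}(C_{σ_{k+1}} ∘ ⋯ ∘ C_{σ_n}(i)) = 0` for all `k = n, …, 1`. -/
def SimplicialWord (n : ℕ) (w : List ℕ) : Prop :=
  ∃ (σ : ℕ → Bool) (c : ℕ → List ℕ), c n = w ∧
    ∀ k, 1 ≤ k → k ≤ n →
      (if σ k then IsContractionD k (c k) (c (k - 1)) ∧ indD k (c k) = 0
       else IsContractionA k (c k) (c (k - 1)) ∧ indA k (c k) = 0)


/-- the `D`-coindex `coind_D(i) = |i_D^-|`. -/
def coindD (n : ℕ) (w : List ℕ) : ℕ :=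
  sInf {s | ∃ u v : List ℕ, u.length = s ∧ TwoMoveEquiv w (u ++ descWord n ++ v)}

/-- the `A`-coindex `coind_A(i) = |i_A^-|`. -/
def coindA (n : ℕ) (w : List ℕ) : ℕ :=
  sInf {s | ∃ u v : List ℕ, u.length = s ∧ TwoMoveEquiv w (u ++ ascWord n ++ v)}

/-- the `a`-th (0-based) coordinate of a point of `ℝ^N`. -/
def entry (n : ℕ) (t : Fin (Dim n) → ℝ) (a : ℕ) : ℝ :=
  if h : a < Dim n then t ⟨a, h⟩ else 0

/-- the product of cones
`t_1 ≥ 0`, `t_2 ≥ t_3 ≥ 0`, …, `t_{N-n+1} ≥ ⋯ ≥ t_N ≥ 0` (in `ℝ^N`, 1-based: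
for `k = 1, …, n` the chain `t_{k(k-1)/2+1} ≥ ⋯ ≥ t_{k(k-1)/2+k} ≥ 0`). -/
def chainCone (n : ℕ) : Set (Fin (Dim n) → ℝ) :=
  {t | ∀ k j, 1 ≤ k → k ≤ n → 1 ≤ j → j ≤ k →
    (if j = k then 0 else entry n t (k * (k - 1) / 2 + j)) ≤
      entry n t (k * (k - 1) / 2 + (j - 1))}


/-!
Both extensions insert, right after node `t_L` with `L = |i⁻(s)|`, a block of `m + 1` nodes on
which one new wire `ℓ_•` crosses every old wire once; the old nodes keep their two wires, up to
the renaming `r ↦ r + c` (`c = 0` for `D`, `c = 1` for `A`), and are only reindexed. So a path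
of `G(i)` is carried to `G(E_•(s)(i))` by reindexing its switching nodes. It passes straight
through the block nodes it meets, which is never a forbidden fragment since `ℓ_D` is the
downward wire of largest index and `ℓ_A` the upward wire of smallest index. It meets each block
node at most once: crossing the gap twice on the same wire would visit twice the last node of
that wire above the gap. Conversely, a rigorous path that never switches on `ℓ_•` only switches
at old nodes, hence comes from a path of `G(i)`.
-/

lemma wordProd_cons (a : ℕ) (w : List ℕ) : wordProd (a :: w) = sTrans a * wordProd w := by
  simp [wordProd]

lemma wordProd_append (u v : List ℕ) : wordProd (u ++ v) = wordProd u * wordProd v := by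
  simp [wordProd]

lemma wordProd_singleton (a : ℕ) : wordProd [a] = sTrans a := by
  simp [wordProd]

lemma sTrans_apply (a c : ℕ) :
    sTrans a c = if c = a then a + 1 else if c = a + 1 then a else c := by
  simp [sTrans, Equiv.swap_apply_def]

lemma wordProd_map_succ_apply_succ (v : List ℕ) (c : ℕ) :
    wordProd (v.map (· + 1)) (c + 1) = wordProd v c + 1 := by
  induction v with
  | nil => rfl
  | cons a v ih =>
    simp only [List.map_cons, wordProd_cons, Equiv.Perm.mul_apply, ih, sTrans_apply]
    split_ifs <;> omega

section Letters

variable {m : ℕ} {w : List ℕ}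

lemma wordProd_apply_of_not_mem_Icc (hw : ∀ a ∈ w, 1 ≤ a ∧ a ≤ m) {c : ℕ}
    (hc : c = 0 ∨ m + 1 < c) : wordProd w c = c := by
  induction w with
  | nil => rfl
  | cons a w ih =>
    have ha := hw a (by simp)
    rw [wordProd_cons, Equiv.Perm.mul_apply, ih fun b hb => hw b (by simp [hb]), sTrans_apply]
    split_ifs <;> omega

lemma wordProd_apply_mem_Icc (hw : ∀ a ∈ w, 1 ≤ a ∧ a ≤ m) {c : ℕ} (h1 : 1 ≤ c)
    (h2 : c ≤ m + 1) : 1 ≤ wordProd w c ∧ wordProd w c ≤ m + 1 := by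
  induction w with
  | nil => exact ⟨h1, h2⟩
  | cons a w ih =>
    have ha := hw a (by simp)
    have := ih fun b hb => hw b (by simp [hb])
    rw [wordProd_cons, Equiv.Perm.mul_apply, sTrans_apply]
    split_ifs <;> omega

end Letters

lemma ascWord_succ (n : ℕ) : ascWord (n + 1) = ascWord n ++ [n + 1] := by
  simp [ascWord, List.range_succ]

lemma descWord_succ (n : ℕ) : descWord (n + 1) = (n + 1) :: descWord n := by
  simp [descWord, ascWord_succ]

lemma length_ascWord (n : ℕ) : (ascWord n).length = n := by simp [ascWord]

lemma length_descWord (n : ℕ) : (descWord n).length = n := by simp [descWord, length_ascWord]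

lemma wordProd_ascWord_apply (n c : ℕ) :
    wordProd (ascWord n) c = if c = n + 1 then 1 else if 1 ≤ c ∧ c ≤ n then c + 1 else c := by
  induction n generalizing c with
  | zero =>
    simp only [ascWord, List.range_zero, List.map_nil, wordProd, List.prod_nil,
      Equiv.Perm.coe_one, id_eq]
    split_ifs <;> omega
  | succ n ih =>
    rw [ascWord_succ, wordProd_append, wordProd_singleton, Equiv.Perm.mul_apply, sTrans_apply]
    split_ifs <;> rw [ih] <;> split_ifs <;> omega

lemma wordProd_descWord_apply (n c : ℕ) :
    wordProd (descWord n) c = if c = 1 then n + 1 else if 2 ≤ c ∧ c ≤ n + 1 then c - 1 else c := by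
  induction n with
  | zero =>
    simp only [descWord, ascWord, List.range_zero, List.map_nil, List.reverse_nil, wordProd,
      List.prod_nil, Equiv.Perm.coe_one, id_eq]
    split_ifs <;> omega
  | succ n ih =>
    rw [descWord_succ, wordProd_cons, Equiv.Perm.mul_apply, ih, sTrans_apply]
    split_ifs <;> omega

section Diagram

variable {w : List ℕ}

lemma letterAt_append_of_le {u : List ℕ} (X : List ℕ) {j : ℕ} (hj : ValidNode u j) :
    letterAt (u ++ X) j = letterAt u j :=
  List.getD_append _ _ _ _ (by unfold ValidNode at hj; omega)

lemma letterAt_append_add (u X : List ℕ) {j : ℕ} (hj : 1 ≤ j) :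
    letterAt (u ++ X) (u.length + j) = letterAt X j := by
  unfold letterAt
  rw [List.getD_append_right _ _ _ _ (by omega)]
  congr 1
  omega

lemma stateAbove_append_of_le {u : List ℕ} (X : List ℕ) {j : ℕ} (hj : j ≤ u.length + 1) :
    stateAbove (u ++ X) j = stateAbove u j := by
  unfold stateAbove
  rw [List.take_append_of_le_length (by omega)]

lemma stateAbove_append_add (u X : List ℕ) {j : ℕ} (hj : 1 ≤ j) :
    stateAbove (u ++ X) (u.length + j) = wordProd u * stateAbove X j := by
  unfold stateAbove
  rw [show u.length + j - 1 = u.length + (j - 1) by omega, List.take_length_add_append,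
    wordProd_append]

lemma letterAt_map_succ {v : List ℕ} {j : ℕ} (hj : ValidNode v j) :
    letterAt (v.map (· + 1)) j = letterAt v j + 1 := by
  unfold letterAt ValidNode at *
  rw [List.getD_eq_getElem _ _ (by rw [List.length_map]; omega),
    List.getD_eq_getElem _ _ (by omega)]
  simp

lemma stateAbove_map_succ_apply_succ (v : List ℕ) (j c : ℕ) :
    stateAbove (v.map (· + 1)) j (c + 1) = stateAbove v j c + 1 := by
  rw [stateAbove, ← List.map_take, wordProd_map_succ_apply_succ, stateAbove]

lemma wires_append_of_validNode {u : List ℕ} (X : List ℕ) {j : ℕ} (hj : ValidNode u j) :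
    wireX (u ++ X) j = wireX u j ∧ wireY (u ++ X) j = wireY u j := by
  simp only [wireX, wireY, letterAt_append_of_le X hj,
    stateAbove_append_of_le X (show j ≤ u.length + 1 by unfold ValidNode at hj; omega),
    and_self]

lemma wires_append_add (u X : List ℕ) {j : ℕ} (hj : 1 ≤ j) :
    wireX (u ++ X) (u.length + j) = wordProd u (wireX X j) ∧
      wireY (u ++ X) (u.length + j) = wordProd u (wireY X j) := by
  simp only [wireX, wireY, letterAt_append_add u X hj, stateAbove_append_add u X hj,
    Equiv.Perm.mul_apply, and_self]

lemma wires_map_succ {v : List ℕ} {j : ℕ} (hj : ValidNode v j) :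
    wireX (v.map (· + 1)) j = wireX v j + 1 ∧ wireY (v.map (· + 1)) j = wireY v j + 1 := by
  simp only [wireX, wireY, letterAt_map_succ hj, stateAbove_map_succ_apply_succ, and_self]

lemma mem_nodesOn {r x : ℕ} : x ∈ nodesOn w r ↔ ValidNode w x ∧ NodeOnWire w x r := by
  simp only [nodesOn, List.mem_filter, List.mem_map, List.mem_range, decide_eq_true_eq,
    ValidNode]
  constructor
  · rintro ⟨⟨a, ha, rfl⟩, h⟩
    exact ⟨⟨by omega, by omega⟩, h⟩
  · rintro ⟨⟨h1, h2⟩, h⟩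
    exact ⟨⟨x - 1, by omega, by omega⟩, h⟩

lemma nodup_nodesOn (r : ℕ) : (nodesOn w r).Nodup :=
  (List.nodup_range.map fun _ _ h => by omega).filter _

lemma mem_segList {r a b x : ℕ} :
    x ∈ segList w r a b ↔
      ValidNode w x ∧ NodeOnWire w x r ∧ min a b < x ∧ x < max a b := by
  simp [segList, mem_nodesOn, and_assoc]

lemma nodup_segList (r a b : ℕ) : (segList w r a b).Nodup :=
  (nodup_nodesOn r).filter _

lemma tailList_eq_segList (r a : ℕ) : tailList w r a = segList w r a (w.length + 1) := by
  refine List.filter_congr fun x hx => ?_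
  have := (mem_nodesOn.1 hx).1.2
  simp only [decide_eq_decide]
  omega

lemma letterAt_mem_Icc {m : ℕ} (hw : ∀ a ∈ w, 1 ≤ a ∧ a ≤ m) {j : ℕ} (hj : ValidNode w j) :
    1 ≤ letterAt w j ∧ letterAt w j ≤ m := by
  unfold letterAt ValidNode at *
  rw [List.getD_eq_getElem _ _ (by omega)]
  exact hw _ (List.getElem_mem _)

lemma wireX_ne_wireY (j : ℕ) : wireX w j ≠ wireY w j := fun h => by
  have := (stateAbove w j).injective h
  omega

lemma nodeOnWire_mem_Icc {m : ℕ} (hw : ∀ a ∈ w, 1 ≤ a ∧ a ≤ m) {j r : ℕ}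
    (hj : ValidNode w j) (hr : NodeOnWire w j r) : 1 ≤ r ∧ r ≤ m + 1 := by
  have hl := letterAt_mem_Icc hw hj
  have hprefix : ∀ a ∈ w.take (j - 1), 1 ≤ a ∧ a ≤ m := fun a ha => hw a (List.mem_of_mem_take ha)
  rcases hr with rfl | rfl <;> exact wordProd_apply_mem_Icc hprefix (by omega) (by omega)

lemma nodeOnWire_otherWire (j r : ℕ) : NodeOnWire w j (otherWire w j r) := by
  unfold otherWire NodeOnWire
  split_ifs <;> simp

lemma otherWire_ne {j r : ℕ} (h : NodeOnWire w j r) : otherWire w j r ≠ r := by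
  have := wireX_ne_wireY (w := w) j
  unfold otherWire
  rcases h with h | h <;> split_ifs <;> omega

lemma nodeOnWire_iff {j r r' : ℕ} (h : NodeOnWire w j r) :
    NodeOnWire w j r' ↔ r' = r ∨ r' = otherWire w j r := by
  have := wireX_ne_wireY (w := w) j
  unfold NodeOnWire otherWire at *
  split_ifs <;> omega

lemma otherWire_eq_of_nodeOnWire {j r r' : ℕ} (h : NodeOnWire w j r) (h' : NodeOnWire w j r')
    (hne : r' ≠ r) : otherWire w j r = r' :=
  ((nodeOnWire_iff h).1 h').resolve_left hne |>.symm

end Diagram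

section Paths

variable {w : List ℕ} {k : ℕ}

lemma segList_comm (r a b : ℕ) : segList w r a b = segList w r b a := by
  simp only [segList, min_comm, max_comm]

/-- The lower endpoints `L_k` act as a virtual node `w.length + 1` below all nodes. -/
lemma isGPPath_iff_travelOK {n : ℕ} {ms : List ℕ} :
    IsGPPath n w k ms ↔
      1 ≤ k ∧ k ≤ n ∧ TravelOK w k k (w.length + 1) ms ∧
        (visitTail w k (w.length + 1) ms).Nodup := by
  rcases ms with _ | ⟨t, ms⟩
  · simp [IsGPPath, TravelOK]
  · simp only [IsGPPath, TravelOK, visitList, visitTail, le_refl, if_true,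
      segList_comm k (w.length + 1), ← tailList_eq_segList]
    constructor
    · rintro ⟨hk1, hk2, ⟨hv, hon, htail, ht⟩, hnd⟩
      exact ⟨hk1, hk2, ⟨hv, hon, by unfold ValidNode at hv; omega, htail, ht⟩, hnd⟩
    · rintro ⟨hk1, hk2, ⟨hv, hon, -, htail, ht⟩, hnd⟩
      exact ⟨hk1, hk2, ⟨hv, hon, htail, ht⟩, hnd⟩

lemma validNode_of_mem_of_travelOK :
    ∀ {ms : List ℕ} {r a : ℕ}, TravelOK w k r a ms → ∀ x ∈ ms, ValidNode w x
  | [], _, _, _ => by simp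
  | _ :: _, _, _, ⟨hv, _, _, _, ht⟩ => by
    rintro x (_ | ⟨_, hx⟩)
    exacts [hv, validNode_of_mem_of_travelOK ht x hx]

lemma validNode_of_mem_of_isGPPath {n : ℕ} {ms : List ℕ} (h : IsGPPath n w k ms) :
    ∀ x ∈ ms, ValidNode w x :=
  validNode_of_mem_of_travelOK (isGPPath_iff_travelOK.1 h).2.2.1

lemma exists_mem_nodeOnWire_succ_of_travelOK :
    ∀ {ms : List ℕ} {r a : ℕ}, TravelOK w k r a ms → r ≠ k + 1 →
      ∃ t ∈ ms, NodeOnWire w t (k + 1)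
  | [], _, _, ⟨hr, _⟩, hne => absurd hr hne
  | t :: _, r, _, ⟨_, _, _, _, ht⟩, _ => by
    by_cases hr : otherWire w t r = k + 1
    · exact ⟨t, List.mem_cons_self, hr ▸ nodeOnWire_otherWire t r⟩
    · obtain ⟨t', ht', hon⟩ := exists_mem_nodeOnWire_succ_of_travelOK ht hr
      exact ⟨t', List.mem_cons_of_mem _ ht', hon⟩

lemma exists_mem_nodeOnWire_of_travelOK {ms : List ℕ} {r a : ℕ}
    (h : TravelOK w k r a ms) (hr : r ≠ k + 1) : ∃ t ∈ ms, NodeOnWire w t r := by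
  rcases ms with _ | ⟨t, ms⟩
  exacts [absurd h.1 hr, ⟨t, List.mem_cons_self, h.2.1⟩]

end Paths

def lastNodeUpTo (w : List ℕ) (r L : ℕ) : ℕ :=
  Nat.findGreatest (fun t => 1 ≤ t ∧ NodeOnWire w t r) L

section LastNode

variable {w : List ℕ} {r L : ℕ}

lemma lastNodeUpTo_le : lastNodeUpTo w r L ≤ L := Nat.findGreatest_le L

lemma le_lastNodeUpTo {t : ℕ} (ht : 1 ≤ t ∧ NodeOnWire w t r) (htL : t ≤ L) :
    t ≤ lastNodeUpTo w r L ∧ 1 ≤ lastNodeUpTo w r L ∧ NodeOnWire w (lastNodeUpTo w r L) r :=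
  ⟨Nat.le_findGreatest htL ht, Nat.findGreatest_spec (P := fun t => 1 ≤ t ∧ NodeOnWire w t r) htL ht⟩

lemma lastNodeUpTo_mem_of_straddle (hL : L ≤ w.length) {a b : ℕ}
    (ha : (1 ≤ a ∧ NodeOnWire w a r) ∨ L < a) (hb : (1 ≤ b ∧ NodeOnWire w b r) ∨ L < b)
    (hlo : min a b ≤ L) (hhi : L < max a b) :
    lastNodeUpTo w r L = a ∨ lastNodeUpTo w r L = b ∨
      lastNodeUpTo w r L ∈ segList w r a b := by
  have hmin : 1 ≤ min a b ∧ NodeOnWire w (min a b) r := by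
    rcases min_choice a b with h | h <;> rw [h] at hlo ⊢
    exacts [ha.resolve_right (by omega), hb.resolve_right (by omega)]
  obtain ⟨hle, h1, hon⟩ := le_lastNodeUpTo hmin hlo
  have hL' : lastNodeUpTo w r L ≤ L := lastNodeUpTo_le
  by_cases heq : min a b = lastNodeUpTo w r L
  · rcases min_choice a b with h | h <;> rw [h] at heq
    exacts [Or.inl heq.symm, Or.inr (Or.inl heq.symm)]
  · exact Or.inr (Or.inr (mem_segList.2 ⟨⟨h1, by omega⟩, hon, by omega, by omega⟩))

end LastNode

def shiftPast (L B x : ℕ) : ℕ := if x ≤ L then x else x + B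

section ShiftPast

variable {L B : ℕ}

lemma monotone_shiftPast : Monotone (shiftPast L B) := fun x y h => by
  unfold shiftPast; split_ifs <;> omega

lemma shiftPast_lt_shiftPast_iff {x y : ℕ} : shiftPast L B x < shiftPast L B y ↔ x < y := by
  unfold shiftPast; split_ifs <;> omega

lemma shiftPast_injective : Function.Injective (shiftPast L B) := fun x y h => by
  unfold shiftPast at h; split_ifs at h <;> omega

lemma shiftPast_lt_add_iff {x d : ℕ} (hd : 1 ≤ d ∧ d ≤ B) : shiftPast L B x < L + d ↔ x ≤ L := by
  unfold shiftPast; split_ifs <;> omega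

lemma add_lt_shiftPast_iff {x d : ℕ} (hd : 1 ≤ d ∧ d ≤ B) : L + d < shiftPast L B x ↔ L < x := by
  unfold shiftPast; split_ifs <;> omega

lemma shiftPast_ne_add {x d : ℕ} (hd : 1 ≤ d ∧ d ≤ B) : shiftPast L B x ≠ L + d := by
  unfold shiftPast; split_ifs <;> omega

lemma exists_eq_shiftPast_or_eq_add (x : ℕ) :
    (∃ j, x = shiftPast L B j) ∨ ∃ d, (1 ≤ d ∧ d ≤ B) ∧ x = L + d := by
  by_cases h1 : x ≤ L
  · exact Or.inl ⟨x, by simp [shiftPast, h1]⟩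
  by_cases h2 : x ≤ L + B
  · exact Or.inr ⟨x - L, by omega, by omega⟩
  · exact Or.inl ⟨x - B, by unfold shiftPast; split_ifs <;> omega⟩

end ShiftPast

/-- `w'` arises from `i ∈ Σ_{m+1}` by inserting, right after node `t_L`, a block of `m + 1`
nodes on which a new wire `ℓ_ω` crosses the old wires: the `d`-th block node `t_{L+d}` is the
crossing of `ℓ_ω` with `ℓ_{blockWire d + c}`, while the old node `t_j` becomes
`t_{shiftPast L (m+1) j}` and keeps its two wires, renamed `r ↦ r + c`. -/
structure WireInsertion (m c ω L : ℕ) (i w' : List ℕ) (blockWire : ℕ → ℕ) : Prop where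
  letters_mem : ∀ a ∈ i, 1 ≤ a ∧ a ≤ m
  le_length : L ≤ i.length
  length_eq : w'.length = i.length + (m + 1)
  new_wire : (c = 0 ∧ ω = m + 2) ∨ (c = 1 ∧ ω = 1)
  wires_shiftPast : ∀ j, ValidNode i j →
    wireX w' (shiftPast L (m + 1) j) = wireX i j + c ∧
      wireY w' (shiftPast L (m + 1) j) = wireY i j + c
  nodeOnWire_block : ∀ d, 1 ≤ d ∧ d ≤ m + 1 → NodeOnWire w' (L + d) ω
  otherWire_block : ∀ d, 1 ≤ d ∧ d ≤ m + 1 → otherWire w' (L + d) ω = blockWire d + c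

namespace WireInsertion

variable {m c ω L : ℕ} {i w' : List ℕ} {blockWire : ℕ → ℕ}
  (E : WireInsertion m c ω L i w' blockWire)
include E

lemma validNode_shiftPast_iff {j : ℕ} : ValidNode w' (shiftPast L (m + 1) j) ↔ ValidNode i j := by
  have := E.le_length
  have := E.length_eq
  unfold ValidNode shiftPast
  split_ifs <;> omega

lemma validNode_block {d : ℕ} (hd : 1 ≤ d ∧ d ≤ m + 1) : ValidNode w' (L + d) := by
  have := E.le_length
  have := E.length_eq
  unfold ValidNode
  omega

lemma shiftPast_length_succ : shiftPast L (m + 1) (i.length + 1) = w'.length + 1 := by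
  have := E.le_length
  have := E.length_eq
  unfold shiftPast
  split_ifs <;> omega

lemma add_ne_new {r : ℕ} (hr : 1 ≤ r ∧ r ≤ m + 1) : r + c ≠ ω := by
  rcases E.new_wire with ⟨rfl, rfl⟩ | ⟨rfl, rfl⟩ <;> omega

lemma nodeOnWire_shiftPast_iff {j : ℕ} (hj : ValidNode i j) (r : ℕ) :
    NodeOnWire w' (shiftPast L (m + 1) j) (r + c) ↔ NodeOnWire i j r := by
  unfold NodeOnWire
  rw [(E.wires_shiftPast j hj).1, (E.wires_shiftPast j hj).2]
  omega

lemma otherWire_shiftPast {j : ℕ} (hj : ValidNode i j) (r : ℕ) :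
    otherWire w' (shiftPast L (m + 1) j) (r + c) = otherWire i j r + c := by
  unfold otherWire
  rw [(E.wires_shiftPast j hj).1, (E.wires_shiftPast j hj).2]
  split_ifs <;> omega

lemma not_nodeOnWire_shiftPast_new {j : ℕ} (hj : ValidNode i j) :
    ¬ NodeOnWire w' (shiftPast L (m + 1) j) ω := by
  have hX := nodeOnWire_mem_Icc E.letters_mem hj (Or.inl rfl)
  have hY := nodeOnWire_mem_Icc E.letters_mem hj (Or.inr rfl)
  unfold NodeOnWire
  rw [(E.wires_shiftPast j hj).1, (E.wires_shiftPast j hj).2]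
  rcases E.new_wire with ⟨rfl, rfl⟩ | ⟨rfl, rfl⟩ <;> omega

lemma nodeOnWire_block_iff {d r : ℕ} (hd : 1 ≤ d ∧ d ≤ m + 1) (hr : 1 ≤ r ∧ r ≤ m + 1) :
    NodeOnWire w' (L + d) (r + c) ↔ r = blockWire d := by
  rw [nodeOnWire_iff (E.nodeOnWire_block d hd), E.otherWire_block d hd]
  have := E.add_ne_new hr
  omega

lemma forbidden_shiftPast_iff {j : ℕ} (hj : ValidNode i j) (k r : ℕ) :
    Forbidden w' (k + c) (shiftPast L (m + 1) j) (r + c) ↔ Forbidden i k j r := by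
  unfold Forbidden
  rw [E.otherWire_shiftPast hj]
  omega

lemma not_forbidden_block {d k r : ℕ} (hd : 1 ≤ d ∧ d ≤ m + 1) (hk : k ≤ m)
    (hr : 1 ≤ r ∧ r ≤ m + 1) (hon : NodeOnWire w' (L + d) (r + c)) :
    ¬ Forbidden w' (k + c) (L + d) (r + c) := by
  unfold Forbidden
  rw [otherWire_eq_of_nodeOnWire hon (E.nodeOnWire_block d hd) (E.add_ne_new hr).symm]
  rcases E.new_wire with ⟨rfl, rfl⟩ | ⟨rfl, rfl⟩ <;> omega

lemma mem_segList_shiftPast_iff {r a b x : ℕ} (hr : 1 ≤ r ∧ r ≤ m + 1) :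
    x ∈ segList w' (r + c) (shiftPast L (m + 1) a) (shiftPast L (m + 1) b) ↔
      (∃ j ∈ segList i r a b, x = shiftPast L (m + 1) j) ∨
        ∃ d, (1 ≤ d ∧ d ≤ m + 1) ∧ x = L + d ∧ r = blockWire d ∧ min a b ≤ L ∧ L < max a b := by
  rw [mem_segList, ← monotone_shiftPast.map_min, ← monotone_shiftPast.map_max]
  constructor
  · rintro ⟨hv, hon, hlo, hhi⟩
    rcases exists_eq_shiftPast_or_eq_add (L := L) (B := m + 1) x with ⟨j, rfl⟩ | ⟨d, hd, rfl⟩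
    · have hj := E.validNode_shiftPast_iff.1 hv
      exact Or.inl ⟨j, mem_segList.2 ⟨hj, (E.nodeOnWire_shiftPast_iff hj r).1 hon,
        shiftPast_lt_shiftPast_iff.1 hlo, shiftPast_lt_shiftPast_iff.1 hhi⟩, rfl⟩
    · exact Or.inr ⟨d, hd, rfl, (E.nodeOnWire_block_iff hd hr).1 hon,
        (shiftPast_lt_add_iff hd).1 hlo, (add_lt_shiftPast_iff hd).1 hhi⟩
  · rintro (⟨j, hj, rfl⟩ | ⟨d, hd, rfl, rfl, hlo, hhi⟩)
    · obtain ⟨hv, hon, hlo, hhi⟩ := mem_segList.1 hj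
      exact ⟨E.validNode_shiftPast_iff.2 hv, (E.nodeOnWire_shiftPast_iff hv r).2 hon,
        shiftPast_lt_shiftPast_iff.2 hlo, shiftPast_lt_shiftPast_iff.2 hhi⟩
    · exact ⟨E.validNode_block hd, (E.nodeOnWire_block_iff hd hr).2 rfl,
        (shiftPast_lt_add_iff hd).2 hlo, (add_lt_shiftPast_iff hd).2 hhi⟩

lemma count_segList_shiftPast {r a b : ℕ} (hr : 1 ≤ r ∧ r ≤ m + 1) (x : ℕ) :
    (segList w' (r + c) (shiftPast L (m + 1) a) (shiftPast L (m + 1) b)).count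
        (shiftPast L (m + 1) x) = (segList i r a b).count x := by
  have hmem : shiftPast L (m + 1) x ∈
      segList w' (r + c) (shiftPast L (m + 1) a) (shiftPast L (m + 1) b) ↔
        x ∈ segList i r a b := by
    refine (E.mem_segList_shiftPast_iff hr).trans ⟨?_, fun hx => Or.inl ⟨x, hx, rfl⟩⟩
    rintro (⟨j, hj, hjx⟩ | ⟨d, hd, hdx, -⟩)
    · rwa [shiftPast_injective hjx]
    · exact absurd hdx (shiftPast_ne_add hd)
  simp only [(nodup_segList _ _ _).count, hmem]

lemma count_segList_block {r a b d : ℕ} (hr : 1 ≤ r ∧ r ≤ m + 1) (hd : 1 ≤ d ∧ d ≤ m + 1) :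
    (segList w' (r + c) (shiftPast L (m + 1) a) (shiftPast L (m + 1) b)).count (L + d) =
      if r = blockWire d ∧ min a b ≤ L ∧ L < max a b then 1 else 0 := by
  have hmem : L + d ∈ segList w' (r + c) (shiftPast L (m + 1) a) (shiftPast L (m + 1) b) ↔
      r = blockWire d ∧ min a b ≤ L ∧ L < max a b := by
    refine (E.mem_segList_shiftPast_iff hr).trans ⟨?_, fun h => Or.inr ⟨d, hd, rfl, h⟩⟩
    rintro (⟨j, -, hj⟩ | ⟨d', -, hd', h⟩)
    · exact absurd hj.symm (shiftPast_ne_add hd)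
    · rwa [show d = d' by omega]
  simp only [(nodup_segList _ _ _).count, hmem]

lemma forall_segList_not_forbidden_shiftPast_iff {k r a b : ℕ} (hk : k ≤ m)
    (hr : 1 ≤ r ∧ r ≤ m + 1) :
    (∀ x ∈ segList w' (r + c) (shiftPast L (m + 1) a) (shiftPast L (m + 1) b),
        ¬ Forbidden w' (k + c) x (r + c)) ↔
      ∀ j ∈ segList i r a b, ¬ Forbidden i k j r := by
  constructor
  · intro h j hj
    rw [← E.forbidden_shiftPast_iff (mem_segList.1 hj).1]
    exact h _ ((E.mem_segList_shiftPast_iff hr).2 (Or.inl ⟨j, hj, rfl⟩))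
  · intro h x hx
    rcases (E.mem_segList_shiftPast_iff hr).1 hx with ⟨j, hj, rfl⟩ | ⟨d, hd, rfl, -⟩
    · rw [E.forbidden_shiftPast_iff (mem_segList.1 hj).1]
      exact h j hj
    · exact E.not_forbidden_block hd hk hr (mem_segList.1 hx).2.1

lemma travelOK_shiftPast_iff {k : ℕ} (hk : k ≤ m) :
    ∀ {ms : List ℕ} {r a : ℕ}, 1 ≤ r ∧ r ≤ m + 1 →
      (TravelOK w' (k + c) (r + c) (shiftPast L (m + 1) a) (ms.map (shiftPast L (m + 1))) ↔
        TravelOK i k r a ms)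
  | [], r, a, hr => by
    simp only [TravelOK, List.map_nil, tailList_eq_segList, ← E.shiftPast_length_succ,
      E.forall_segList_not_forbidden_shiftPast_iff hk hr]
    exact and_congr_left fun _ => by omega
  | t :: ms, r, a, hr => by
    simp only [TravelOK, List.map_cons, E.validNode_shiftPast_iff]
    refine and_congr_right fun ht => ?_
    rw [E.nodeOnWire_shiftPast_iff ht, E.otherWire_shiftPast ht,
      E.forall_segList_not_forbidden_shiftPast_iff hk hr,
      travelOK_shiftPast_iff hk (nodeOnWire_mem_Icc E.letters_mem ht (nodeOnWire_otherWire t r))]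
    simp only [add_le_add_iff_right, shiftPast_lt_shiftPast_iff]

lemma count_visitTail_shiftPast {k : ℕ} :
    ∀ {ms : List ℕ} {r a : ℕ}, 1 ≤ r ∧ r ≤ m + 1 → TravelOK i k r a ms → ∀ x,
      (visitTail w' (r + c) (shiftPast L (m + 1) a) (ms.map (shiftPast L (m + 1)))).count
          (shiftPast L (m + 1) x) = (visitTail i r a ms).count x
  | [], r, a, hr, _, x => by
    simp only [visitTail, List.map_nil, tailList_eq_segList, ← E.shiftPast_length_succ,
      E.count_segList_shiftPast hr]
  | t :: ms, r, a, hr, ⟨ht, _, _, _, hrest⟩, x => by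
    simp only [visitTail, List.map_cons, List.count_append, List.count_cons,
      E.otherWire_shiftPast ht, E.count_segList_shiftPast hr, beq_iff_eq,
      shiftPast_injective.eq_iff, count_visitTail_shiftPast
        (nodeOnWire_mem_Icc E.letters_mem ht (nodeOnWire_otherWire t r)) hrest x]

/-- The block node `t_{L+d}` is passed once for each crossing of the gap below `t_L` on the wire
`blockWire d`, and each such crossing passes the last node of that wire above the gap; the last
term accounts for the starting node `a`, which is not listed in `visitTail`. -/
lemma count_visitTail_block_le {k d : ℕ} (hd : 1 ≤ d ∧ d ≤ m + 1) :
    ∀ {ms : List ℕ} {r a : ℕ}, 1 ≤ r ∧ r ≤ m + 1 → TravelOK i k r a ms →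
      ((1 ≤ a ∧ NodeOnWire i a r) ∨ L < a) →
      (visitTail w' (r + c) (shiftPast L (m + 1) a) (ms.map (shiftPast L (m + 1)))).count
          (L + d) ≤
        (visitTail i r a ms).count (lastNodeUpTo i (blockWire d) L) +
          if r = blockWire d ∧ a = lastNodeUpTo i (blockWire d) L then 1 else 0
  | [], r, a, hr, _, ha => by
    have hy := lastNodeUpTo_le (w := i) (r := blockWire d) (L := L)
    have hL := E.le_length
    have hstraddle : r = blockWire d → min a (i.length + 1) ≤ L → L < max a (i.length + 1) →
        lastNodeUpTo i (blockWire d) L = a ∨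
          0 < (segList i r a (i.length + 1)).count (lastNodeUpTo i (blockWire d) L) := by
      rintro rfl hlo hhi
      rcases lastNodeUpTo_mem_of_straddle hL ha (Or.inr (by omega)) hlo hhi with h | h | h
      exacts [Or.inl h, by omega, Or.inr (List.count_pos_iff.2 h)]
    simp only [visitTail, List.map_nil, tailList_eq_segList, ← E.shiftPast_length_succ,
      E.count_segList_block hr hd]
    split_ifs <;> omega
  | t :: ms, r, a, hr, ⟨ht, hon, _, _, hrest⟩, ha => by
    have ih := count_visitTail_block_le hd
      (nodeOnWire_mem_Icc E.letters_mem ht (nodeOnWire_otherWire t r)) hrest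
      (Or.inl ⟨ht.1, nodeOnWire_otherWire t r⟩)
    have hne := otherWire_ne hon
    have hblock : shiftPast L (m + 1) t ≠ L + d := shiftPast_ne_add hd
    have hstraddle : r = blockWire d → min a t ≤ L → L < max a t →
        lastNodeUpTo i (blockWire d) L = a ∨ lastNodeUpTo i (blockWire d) L = t ∨
          0 < (segList i r a t).count (lastNodeUpTo i (blockWire d) L) := by
      rintro rfl hlo hhi
      rcases lastNodeUpTo_mem_of_straddle E.le_length ha (Or.inl ⟨ht.1, hon⟩) hlo hhi
        with h | h | h
      exacts [Or.inl h, Or.inr (Or.inl h), Or.inr (Or.inr (List.count_pos_iff.2 h))]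
    simp only [visitTail, List.map_cons, List.count_append, List.count_cons,
      E.otherWire_shiftPast ht, E.count_segList_block hr hd, beq_iff_eq] at ih ⊢
    split_ifs at ih ⊢ <;> omega

lemma isGPPath_shiftPast_iff {k : ℕ} {ms : List ℕ} (hk : 1 ≤ k ∧ k ≤ m) :
    IsGPPath (m + 1) w' (k + c) (ms.map (shiftPast L (m + 1))) ↔ IsGPPath m i k ms := by
  have hc : c ≤ 1 := by rcases E.new_wire with ⟨rfl, -⟩ | ⟨rfl, -⟩ <;> omega
  have hkr : 1 ≤ k ∧ k ≤ m + 1 := by omega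
  rw [isGPPath_iff_travelOK, isGPPath_iff_travelOK, ← E.shiftPast_length_succ,
    E.travelOK_shiftPast_iff hk.2 hkr]
  constructor
  · rintro ⟨-, -, ht, hnd⟩
    refine ⟨hk.1, hk.2, ht, List.nodup_iff_count_le_one.2 fun x => ?_⟩
    rw [← E.count_visitTail_shiftPast hkr ht x]
    exact List.nodup_iff_count_le_one.1 hnd _
  · rintro ⟨-, -, ht, hnd⟩
    refine ⟨by omega, by omega, ht, List.nodup_iff_count_le_one.2 fun x => ?_⟩
    rcases exists_eq_shiftPast_or_eq_add (L := L) (B := m + 1) x with ⟨j, rfl⟩ | ⟨d, hd, rfl⟩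
    · rw [E.count_visitTail_shiftPast hkr ht j]
      exact List.nodup_iff_count_le_one.1 hnd j
    · have hL := E.le_length
      have hle := E.count_visitTail_block_le hd hkr ht (Or.inr (by omega))
      have hone := List.nodup_iff_count_le_one.1 hnd (lastNodeUpTo i (blockWire d) L)
      have hy := lastNodeUpTo_le (w := i) (r := blockWire d) (L := L)
      split_ifs at hle <;> omega

lemma exists_eq_shiftPast_of_isGPPath {k' : ℕ} {ms' : List ℕ} (h : IsGPPath (m + 1) w' k' ms')
    (hω : ∀ t ∈ ms', ¬ NodeOnWire w' t ω) :
    ∃ k ms, IsGPPath m i k ms ∧ k' = k + c ∧ ms' = ms.map (shiftPast L (m + 1)) := by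
  obtain ⟨hk1, hk2, ht, -⟩ := isGPPath_iff_travelOK.1 h
  have hk : 1 ≤ k' - c ∧ k' - c ≤ m ∧ k' = k' - c + c := by
    rcases E.new_wire with ⟨rfl, rfl⟩ | ⟨rfl, rfl⟩
    · by_contra hk
      obtain ⟨t, ht', hon⟩ := exists_mem_nodeOnWire_succ_of_travelOK ht (by omega)
      exact hω t ht' (by rwa [show k' + 1 = m + 2 by omega] at hon)
    · by_contra hk
      obtain ⟨t, ht', hon⟩ := exists_mem_nodeOnWire_of_travelOK ht (by omega)
      exact hω t ht' (by rwa [show k' = 1 by omega] at hon)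
  obtain ⟨ms, rfl⟩ : ms' ∈ Set.range (List.map (shiftPast L (m + 1))) := by
    rw [Set.range_list_map]
    intro x hx
    rcases exists_eq_shiftPast_or_eq_add (L := L) (B := m + 1) x with ⟨j, rfl⟩ | ⟨d, hd, rfl⟩
    exacts [⟨j, rfl⟩, absurd (E.nodeOnWire_block d hd) (hω _ hx)]
  refine ⟨k' - c, ms, ?_, hk.2.2, rfl⟩
  rw [← E.isGPPath_shiftPast_iff ⟨hk.1, hk.2.1⟩, ← hk.2.2]
  exact h

theorem exists_injective_range_eq :
    ∃ Ψ : {p // p ∈ GP m i} → {q // q ∈ GP (m + 1) w'},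
      Function.Injective Ψ ∧
      Set.range (fun p => (Ψ p).1) = {q | q ∈ GP (m + 1) w' ∧ ∀ t ∈ q.2, ¬ NodeOnWire w' t ω} := by
  have hmem : ∀ p ∈ GP m i, (p.1 + c, p.2.map (shiftPast L (m + 1))) ∈ GP (m + 1) w' :=
    fun p hp => (E.isGPPath_shiftPast_iff ⟨hp.1, hp.2.1⟩).2 hp
  refine ⟨fun p => ⟨_, hmem p.1 p.2⟩, fun p q h => ?_, ?_⟩
  · simp only [Subtype.mk.injEq, Prod.mk.injEq, add_left_inj,
      (List.map_injective_iff.2 shiftPast_injective).eq_iff] at h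
    exact Subtype.ext (Prod.ext h.1 h.2)
  · ext q
    constructor
    · rintro ⟨⟨⟨k, ms⟩, hp⟩, rfl⟩
      refine ⟨hmem _ hp, fun t ht => ?_⟩
      obtain ⟨j, hj, rfl⟩ := List.mem_map.1 ht
      exact E.not_nodeOnWire_shiftPast_new (validNode_of_mem_of_isGPPath hp j hj)
    · rintro ⟨h, hω⟩
      obtain ⟨k, ms, hp, hk, hms⟩ := E.exists_eq_shiftPast_of_isGPPath h hω
      exact ⟨⟨(k, ms), hp⟩, Prod.ext hk.symm hms.symm⟩

end WireInsertion

lemma wires_cons_one (a : ℕ) (X : List ℕ) : wireX (a :: X) 1 = a ∧ wireY (a :: X) 1 = a + 1 := by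
  simp [wireX, wireY, stateAbove, letterAt, wordProd]

lemma wires_descWord {n d : ℕ} (hd : 1 ≤ d ∧ d ≤ n) :
    wireX (descWord n) d = n + 1 - d ∧ wireY (descWord n) d = n + 1 := by
  induction n generalizing d with
  | zero => omega
  | succ n ih =>
    rw [descWord_succ]
    rcases Nat.lt_or_ge 1 d with h | h
    · obtain ⟨d, rfl⟩ : ∃ d', d = 1 + d' := ⟨d - 1, by omega⟩
      obtain ⟨hX, hY⟩ := wires_append_add [n + 1] (descWord n) (show 1 ≤ d by omega)
      obtain ⟨hX', hY'⟩ := ih (show 1 ≤ d ∧ d ≤ n by omega)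
      simp only [List.singleton_append, List.length_singleton, wordProd_singleton] at hX hY
      rw [hX, hY, hX', hY', sTrans_apply, sTrans_apply]
      constructor <;> split_ifs <;> omega
    · obtain rfl : d = 1 := by omega
      exact wires_cons_one (n + 1) (descWord n)

lemma wires_ascWord {n d : ℕ} (hd : 1 ≤ d ∧ d ≤ n) :
    wireX (ascWord n) d = 1 ∧ wireY (ascWord n) d = d + 1 := by
  induction n generalizing d with
  | zero => omega
  | succ n ih =>
    rw [ascWord_succ]
    rcases Nat.lt_or_ge d (n + 1) with h | h
    · obtain ⟨hX, hY⟩ :=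
        wires_append_of_validNode [n + 1] (⟨hd.1, by rw [length_ascWord]; omega⟩ :
          ValidNode (ascWord n) d)
      rw [hX, hY]
      exact ih (by omega)
    · obtain rfl : d = n + 1 := by omega
      obtain ⟨hX, hY⟩ := wires_append_add (ascWord n) [n + 1] (le_refl 1)
      obtain ⟨hX', hY'⟩ := wires_cons_one (n + 1) []
      rw [length_ascWord] at hX hY
      rw [hX, hY, hX', hY', wordProd_ascWord_apply, wordProd_ascWord_apply]
      constructor <;> split_ifs <;> omega

section Extension

variable {m : ℕ} {u v : List ℕ}

lemma wires_descWord_block (hu : ∀ a ∈ u, 1 ≤ a ∧ a ≤ m) (X : List ℕ) {d : ℕ}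
    (hd : 1 ≤ d ∧ d ≤ m + 1) :
    wireX (u ++ (descWord (m + 1) ++ X)) (u.length + d) = wordProd u (m + 2 - d) ∧
      wireY (u ++ (descWord (m + 1) ++ X)) (u.length + d) = m + 2 := by
  obtain ⟨hX, hY⟩ := wires_append_add u (descWord (m + 1) ++ X) hd.1
  have hd' : ValidNode (descWord (m + 1)) d := ⟨hd.1, by rw [length_descWord]; exact hd.2⟩
  obtain ⟨hX', hY'⟩ := wires_append_of_validNode X hd'
  obtain ⟨hX'', hY''⟩ := wires_descWord hd
  rw [hX, hY, hX', hY', hX'', hY'', wordProd_apply_of_not_mem_Icc hu (c := m + 1 + 1) (by omega)]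
  exact ⟨rfl, rfl⟩

lemma wires_ascWord_block (hu : ∀ a ∈ u, 1 ≤ a ∧ a ≤ m) (X : List ℕ) {d : ℕ}
    (hd : 1 ≤ d ∧ d ≤ m + 1) :
    wireX (u.map (· + 1) ++ (ascWord (m + 1) ++ X)) (u.length + d) = 1 ∧
      wireY (u.map (· + 1) ++ (ascWord (m + 1) ++ X)) (u.length + d) = wordProd u d + 1 := by
  obtain ⟨hX, hY⟩ := wires_append_add (u.map (· + 1)) (ascWord (m + 1) ++ X) hd.1
  have hd' : ValidNode (ascWord (m + 1)) d := ⟨hd.1, by rw [length_ascWord]; exact hd.2⟩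
  obtain ⟨hX', hY'⟩ := wires_append_of_validNode X hd'
  obtain ⟨hX'', hY''⟩ := wires_ascWord hd
  have hone : wordProd (u.map (· + 1)) 1 = 1 := by
    simpa [wordProd_apply_of_not_mem_Icc hu (c := 0) (by omega)] using
      wordProd_map_succ_apply_succ u 0
  rw [List.length_map] at hX hY
  rw [hX, hY, hX', hY', hX'', hY'', hone, wordProd_map_succ_apply_succ]
  exact ⟨rfl, rfl⟩

lemma wires_descWord_after (hv : ∀ a ∈ v, 1 ≤ a ∧ a ≤ m) (u : List ℕ) {j : ℕ}
    (hj : ValidNode v j) :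
    wireX (u ++ (descWord (m + 1) ++ v.map (· + 1))) (u.length + j + (m + 1)) =
        wireX (u ++ v) (u.length + j) ∧
      wireY (u ++ (descWord (m + 1) ++ v.map (· + 1))) (u.length + j + (m + 1)) =
        wireY (u ++ v) (u.length + j) := by
  have hD : ∀ c, 1 ≤ c ∧ c ≤ m + 1 → wordProd (descWord (m + 1)) (c + 1) = c := by
    intro c hc
    rw [wordProd_descWord_apply]
    split_ifs <;> omega
  obtain ⟨hX, hY⟩ := wires_append_add u (descWord (m + 1) ++ v.map (· + 1))
    (show 1 ≤ m + 1 + j by omega)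
  obtain ⟨hX', hY'⟩ := wires_append_add (descWord (m + 1)) (v.map (· + 1)) hj.1
  rw [length_descWord] at hX' hY'
  rw [show u.length + j + (m + 1) = u.length + (m + 1 + j) by omega, hX, hY, hX', hY',
    (wires_map_succ hj).1, (wires_map_succ hj).2, hD _ (nodeOnWire_mem_Icc hv hj (Or.inl rfl)),
    hD _ (nodeOnWire_mem_Icc hv hj (Or.inr rfl)), (wires_append_add u v hj.1).1,
    (wires_append_add u v hj.1).2]
  exact ⟨rfl, rfl⟩

lemma wires_ascWord_after (hv : ∀ a ∈ v, 1 ≤ a ∧ a ≤ m) (u : List ℕ) {j : ℕ}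
    (hj : ValidNode v j) :
    wireX (u.map (· + 1) ++ (ascWord (m + 1) ++ v)) (u.length + j + (m + 1)) =
        wireX (u ++ v) (u.length + j) + 1 ∧
      wireY (u.map (· + 1) ++ (ascWord (m + 1) ++ v)) (u.length + j + (m + 1)) =
        wireY (u ++ v) (u.length + j) + 1 := by
  have hA : ∀ c, 1 ≤ c ∧ c ≤ m + 1 → wordProd (ascWord (m + 1)) c = c + 1 := by
    intro c hc
    rw [wordProd_ascWord_apply]
    split_ifs <;> omega
  obtain ⟨hX, hY⟩ := wires_append_add (u.map (· + 1)) (ascWord (m + 1) ++ v)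
    (show 1 ≤ m + 1 + j by omega)
  obtain ⟨hX', hY'⟩ := wires_append_add (ascWord (m + 1)) v hj.1
  rw [List.length_map] at hX hY
  rw [length_ascWord] at hX' hY'
  rw [show u.length + j + (m + 1) = u.length + (m + 1 + j) by omega, hX, hY, hX', hY',
    hA _ (nodeOnWire_mem_Icc hv hj (Or.inl rfl)), hA _ (nodeOnWire_mem_Icc hv hj (Or.inr rfl)),
    wordProd_map_succ_apply_succ, wordProd_map_succ_apply_succ, (wires_append_add u v hj.1).1,
    (wires_append_add u v hj.1).2]
  exact ⟨rfl, rfl⟩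

lemma wireInsertion_descWord (hu : ∀ a ∈ u, 1 ≤ a ∧ a ≤ m) (hv : ∀ a ∈ v, 1 ≤ a ∧ a ≤ m) :
    WireInsertion m 0 (m + 2) u.length (u ++ v) (u ++ descWord (m + 1) ++ v.map (· + 1))
      (fun d => wordProd u (m + 2 - d)) where
  letters_mem a ha := (List.mem_append.1 ha).elim (hu a) (hv a)
  le_length := by simp
  length_eq := by
    simp only [List.length_append, length_descWord, List.length_map]
    omega
  new_wire := Or.inl ⟨rfl, rfl⟩
  wires_shiftPast j hj := by
    rw [List.append_assoc]
    unfold shiftPast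
    split_ifs with hju
    · have hj' : ValidNode u j := ⟨hj.1, hju⟩
      rw [(wires_append_of_validNode _ hj').1, (wires_append_of_validNode _ hj').2,
        (wires_append_of_validNode v hj').1, (wires_append_of_validNode v hj').2]
      exact ⟨rfl, rfl⟩
    · obtain ⟨j, rfl⟩ : ∃ j', j = u.length + j' := ⟨j - u.length, by omega⟩
      have := hj.2
      rw [List.length_append] at this
      exact wires_descWord_after hv u ⟨by omega, by omega⟩
  nodeOnWire_block d hd := by
    rw [List.append_assoc]
    exact Or.inr (wires_descWord_block hu _ hd).2
  otherWire_block d hd := by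
    have hb := wordProd_apply_mem_Icc hu (c := m + 2 - d) (by omega) (by omega)
    rw [List.append_assoc, otherWire, (wires_descWord_block hu _ hd).1,
      (wires_descWord_block hu _ hd).2, if_neg (by omega)]
    rfl

lemma wireInsertion_ascWord (hu : ∀ a ∈ u, 1 ≤ a ∧ a ≤ m) (hv : ∀ a ∈ v, 1 ≤ a ∧ a ≤ m) :
    WireInsertion m 1 1 u.length (u ++ v) (u.map (· + 1) ++ ascWord (m + 1) ++ v)
      (fun d => wordProd u d) where
  letters_mem a ha := (List.mem_append.1 ha).elim (hu a) (hv a)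
  le_length := by simp
  length_eq := by
    simp only [List.length_append, List.length_map, length_ascWord]
    omega
  new_wire := Or.inr ⟨rfl, rfl⟩
  wires_shiftPast j hj := by
    rw [List.append_assoc]
    unfold shiftPast
    split_ifs with hju
    · have hj' : ValidNode u j := ⟨hj.1, hju⟩
      have hj'' : ValidNode (u.map (· + 1)) j := ⟨hj.1, by rw [List.length_map]; exact hju⟩
      rw [(wires_append_of_validNode _ hj'').1, (wires_append_of_validNode _ hj'').2,
        (wires_append_of_validNode v hj').1, (wires_append_of_validNode v hj').2]
      exact wires_map_succ hj'
    · obtain ⟨j, rfl⟩ : ∃ j', j = u.length + j' := ⟨j - u.length, by omega⟩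
      have := hj.2
      rw [List.length_append] at this
      exact wires_ascWord_after hv u ⟨by omega, by omega⟩
  nodeOnWire_block d hd := by
    rw [List.append_assoc]
    exact Or.inl (wires_ascWord_block hu _ hd).1
  otherWire_block d hd := by
    rw [List.append_assoc, otherWire, (wires_ascWord_block hu _ hd).1,
      (wires_ascWord_block hu _ hd).2, if_pos rfl]

end Extension

theorem statement8_general (m : ℕ) (i : List ℕ) (hi : IsReduced m i)
    (s : ℕ) :
    (∃ Ψ : {p // p ∈ GP m i} → {q // q ∈ GP (m + 1) (extD m s i)},
      Function.Injective Ψ ∧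
      Set.range (fun p => (Ψ p).1) =
        {q | q ∈ GP (m + 1) (extD m s i) ∧
          ∀ t ∈ q.2, ¬ NodeOnWire (extD m s i) t (m + 2)}) ∧
    (∃ Ψ : {p // p ∈ GP m i} → {q // q ∈ GP (m + 1) (extA m s i)},
      Function.Injective Ψ ∧
      Set.range (fun p => (Ψ p).1) =
        {q | q ∈ GP (m + 1) (extA m s i) ∧
          ∀ t ∈ q.2, ¬ NodeOnWire (extA m s i) t 1}) := by
  have hu : ∀ a ∈ i.take (i.length - s), 1 ≤ a ∧ a ≤ m :=
    fun a ha => hi.2.1 a (List.mem_of_mem_take ha)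
  have hv : ∀ a ∈ i.drop (i.length - s), 1 ≤ a ∧ a ≤ m :=
    fun a ha => hi.2.1 a (List.mem_of_mem_drop ha)
  have hsplit := List.take_append_drop (i.length - s) i
  constructor
  · have := (wireInsertion_descWord hu hv).exists_injective_range_eq
    rwa [hsplit] at this
  · have := (wireInsertion_ascWord hu hv).exists_injective_range_eq
    rwa [hsplit] at this

/-- Lemma: old paths under extension.
For `i ∈ Σ_{m+1}`, `• ∈ {A, D}` and `0 ≤ s ≤ m(m+1)/2` there is an injection
`Ψ_•(i,s) : GP(i) ↪ GP(E_•(s)(i))` whose image is exactly the set of rigorous paths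
of `G(E_•(s)(i))` none of whose switching nodes lies on the wire `ℓ_•`, where
`ℓ_D` is the last wire `ℓ_{m+2}` and `ℓ_A = ℓ_1`. -/
theorem statement8 (m : ℕ) (hm : 1 ≤ m) (i : List ℕ) (hi : IsReduced m i)
    (s : ℕ) (hs : s ≤ Dim m) :
    (∃ Ψ : {p // p ∈ GP m i} → {q // q ∈ GP (m + 1) (extD m s i)},
      Function.Injective Ψ ∧
      Set.range (fun p => (Ψ p).1) =
        {q | q ∈ GP (m + 1) (extD m s i) ∧
          ∀ t ∈ q.2, ¬ NodeOnWire (extD m s i) t (m + 2)}) ∧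
    (∃ Ψ : {p // p ∈ GP m i} → {q // q ∈ GP (m + 1) (extA m s i)},
      Function.Injective Ψ ∧
      Set.range (fun p => (Ψ p).1) =
        {q | q ∈ GP (m + 1) (extA m s i) ∧
          ∀ t ∈ q.2, ¬ NodeOnWire (extA m s i) t 1}) :=
  statement8_general m i hi s

end StringPolytope
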